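/- ZPostS equals the class of regular languages: a language L ⊆ Σ* is recognized with error bound 0 by some RT-PostPFA if and only if L is regular. -/

import Mathlib

noncomputable section

/-- The input alphabet extended with the two endmarkers `¢` and `$`. -/
inductive ESym (α : Type) : Type where
  | cent : ESym α
  | dollar : ESym α
  | letter : α → ESym α

/-- The state distribution obtained by applying, in order, the matrices for
`¢`, the letters of `w`, and `$` to the standard basis vector at the initial state `0`. -/
def pRun {α : Type} {n : ℕ} (A : ESym α → Matrix (Fin (n + 1)) (Fin (n + 1)) ℝ)
    (w : List α) : Fin (n + 1) → ℝ :=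
  (ESym.cent :: (w.map ESym.letter ++ [ESym.dollar])).foldl
    (fun v σ => (A σ).mulVec v) (Pi.single 0 1)

/-- A real-time probabilistic finite automaton with postselection (RT-PostPFA). -/
structure PostPFA (α : Type) where
  n : ℕ
  A : ESym α → Matrix (Fin (n + 1)) (Fin (n + 1)) ℝ
  nonneg : ∀ σ i j, 0 ≤ A σ i j
  colSum : ∀ σ j, ∑ i, A σ i j = 1
  Qpa : Finset (Fin (n + 1))
  Qpr : Finset (Fin (n + 1))
  disj : Disjoint Qpa Qpr
  postPos : ∀ w : List α,
    0 < (∑ i ∈ Qpa, pRun A w i) + (∑ i ∈ Qpr, pRun A w i)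

/-- Acceptance probability before postselection. -/
def PostPFA.pacc {α : Type} (M : PostPFA α) (w : List α) : ℝ :=
  ∑ i ∈ M.Qpa, pRun M.A w i

/-- Rejection probability before postselection. -/
def PostPFA.prej {α : Type} (M : PostPFA α) (w : List α) : ℝ :=
  ∑ i ∈ M.Qpr, pRun M.A w i

/-- Normalized acceptance probability of an RT-PostPFA. -/
def PostPFA.fa {α : Type} (M : PostPFA α) (w : List α) : ℝ :=
  M.pacc w / (M.pacc w + M.prej w)

/-- Recognition of a language with error bound `ε`. -/
def PostPFA.Recognizes {α : Type} (M : PostPFA α) (L : Set (List α)) (ε : ℝ) : Prop :=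
  ∀ w : List α, (w ∈ L → 1 - ε ≤ M.fa w) ∧ (w ∉ L → M.fa w ≤ ε)

/-- The class of languages recognized by RT-PostPFAs with bounded error. -/
def PostS {α : Type} (L : Set (List α)) : Prop :=
  ∃ (M : PostPFA α) (ε : ℝ), 0 ≤ ε ∧ ε < 1 / 2 ∧ M.Recognizes L ε

/-- Recognition with zero error: `fa = 1` on members, `fa = 0` on non-members. -/
def PostPFA.RecognizesZero {α : Type} (M : PostPFA α) (L : Set (List α)) : Prop :=
  ∀ w : List α, (w ∈ L → M.fa w = 1) ∧ (w ∉ L → M.fa w = 0)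

/-- The class of languages recognized by RT-PostPFAs with zero error. -/
def ZPostS {α : Type} (L : Set (List α)) : Prop :=
  ∃ M : PostPFA α, M.RecognizesZero L

/-!
For nonnegative matrices, whether an entry of `A *ᵥ v` vanishes depends only on which entries
of `A` and `v` vanish, so the support of the state vector evolves as the state set of a
nondeterministic automaton. With zero error, `w ∈ L` exactly when some postselection-accepting
state carries nonzero probability, i.e. when that automaton accepts `w`; the subset construction
makes `L` regular. Conversely, a DFA is a PostPFA whose matrices are 0/1 matrices of functions,
postselecting on whether the final state is accepting.
-/

open Function
open scoped Matrix

namespace Matrix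

variable {ι m n R : Type*}

section Support

variable [Fintype n] [Semiring R] [PartialOrder R] [IsOrderedRing R]

theorem mulVec_nonneg {B : Matrix m n R} {v : n → R} (hB : ∀ i j, 0 ≤ B i j) (hv : 0 ≤ v) :
    0 ≤ B *ᵥ v :=
  fun i => Finset.sum_nonneg fun j _ => mul_nonneg (hB i j) (hv j)

theorem foldl_mulVec_nonneg {β : Type*} (A : β → Matrix n n R) (hA : ∀ b i j, 0 ≤ A b i j)
    (l : List β) {v : n → R} (hv : 0 ≤ v) : 0 ≤ l.foldl (fun v b => A b *ᵥ v) v := by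
  induction l generalizing v with
  | nil => exact hv
  | cons b l ih => exact ih (mulVec_nonneg (hA b) hv)

theorem support_mulVec_of_nonneg [NoZeroDivisors R] {B : Matrix m n R} {v : n → R}
    (hB : ∀ i j, 0 ≤ B i j) (hv : 0 ≤ v) :
    support (B *ᵥ v) = ⋃ j ∈ support v, {i | B i j ≠ 0} := by
  ext i
  simp only [mem_support, mulVec, dotProduct, ne_eq,
    Finset.sum_eq_zero_iff_of_nonneg fun j _ => mul_nonneg (hB i j) (hv j), Finset.mem_univ,
    true_implies, mul_eq_zero, not_forall, not_or, Set.mem_iUnion, Set.mem_ofPred_eq, exists_prop]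
  exact exists_congr fun _ => and_comm

theorem support_foldl_mulVec_of_nonneg [NoZeroDivisors R] {β : Type*} (A : β → Matrix n n R)
    (hA : ∀ b i j, 0 ≤ A b i j) (N : NFA β n) (hN : ∀ j b, N.step j b = {i | A b i j ≠ 0})
    (l : List β) {v : n → R} (hv : 0 ≤ v) :
    support (l.foldl (fun v b => A b *ᵥ v) v) = N.evalFrom (support v) l := by
  induction l generalizing v with
  | nil => rfl
  | cons b l ih =>
    rw [List.foldl_cons, ih (mulVec_nonneg (hA b) hv), support_mulVec_of_nonneg (hA b) hv,
      NFA.evalFrom_cons]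
    simp only [NFA.stepSet, hN]

end Support

section OfFun

variable [DecidableEq ι] [Semiring R]

def ofFun (f : ι → ι) : Matrix ι ι R :=
  of fun i j => (Pi.single (f j) 1 : ι → R) i

theorem ofFun_mulVec_single_one [Fintype ι] (f : ι → ι) (j : ι) :
    ofFun f *ᵥ Pi.single j (1 : R) = Pi.single (f j) 1 := by
  rw [mulVec_single_one]
  rfl

theorem foldl_ofFun_mulVec_single_one [Fintype ι] {β : Type*} (T : β → ι → ι) (l : List β) (j : ι) :
    l.foldl (fun v b => ofFun (T b) *ᵥ v) (Pi.single j (1 : R)) =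
      Pi.single (l.foldl (fun j b => T b j) j) 1 := by
  induction l generalizing j with
  | nil => rfl
  | cons b l ih => rw [List.foldl_cons, ofFun_mulVec_single_one, ih]; rfl

theorem sum_ofFun_apply [Fintype ι] (f : ι → ι) (j : ι) : ∑ i, ofFun (R := R) f i j = 1 := by
  simp [ofFun, Finset.sum_pi_single']

theorem ofFun_nonneg [PartialOrder R] [ZeroLEOneClass R] (f : ι → ι) (i j : ι) :
    0 ≤ ofFun (R := R) f i j :=
  (Pi.single_nonneg.2 zero_le_one : 0 ≤ (Pi.single (f j) 1 : ι → R)) i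

end OfFun

end Matrix

theorem pRun_eq_mulVec_foldl {α : Type} {n : ℕ} (A : ESym α → Matrix (Fin (n + 1)) (Fin (n + 1)) ℝ)
    (w : List α) :
    pRun A w = A .dollar *ᵥ
      w.foldl (fun v a => A (.letter a) *ᵥ v) (A .cent *ᵥ Pi.single 0 1) := by
  simp [pRun, List.foldl_append, List.foldl_map]

namespace PostPFA

variable {α : Type} (M : PostPFA α)

/-- Tracks which states of `M` carry nonzero probability. -/
def supportNFA : NFA α (Fin (M.n + 1)) where
  step j a := {i | M.A (.letter a) i j ≠ 0}
  start := {i | M.A .cent i 0 ≠ 0}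
  accept := {j | ∃ i ∈ M.Qpa, M.A .dollar i j ≠ 0}

theorem pRun_nonneg (w : List α) : 0 ≤ pRun M.A w :=
  Matrix.foldl_mulVec_nonneg M.A M.nonneg _ (Pi.single_nonneg.2 zero_le_one)

theorem pacc_ne_zero_iff (w : List α) : M.pacc w ≠ 0 ↔ w ∈ M.supportNFA.accepts := by
  set v₀ := M.A .cent *ᵥ Pi.single 0 1
  have hv₀ : 0 ≤ v₀ := Matrix.mulVec_nonneg (M.nonneg _) (Pi.single_nonneg.2 zero_le_one)
  have hstart : support v₀ = M.supportNFA.start := by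
    ext i
    simp [v₀, supportNFA]
  have hsupp : support (w.foldl (fun v a => M.A (.letter a) *ᵥ v) v₀) = M.supportNFA.eval w := by
    rw [Matrix.support_foldl_mulVec_of_nonneg _ (fun a => M.nonneg _) M.supportNFA
      (fun _ _ => rfl) _ hv₀, hstart]
    rfl
  have hrun : support (pRun M.A w) = ⋃ j ∈ M.supportNFA.eval w, {i | M.A .dollar i j ≠ 0} := by
    rw [pRun_eq_mulVec_foldl, Matrix.support_mulVec_of_nonneg (M.nonneg _)
      (Matrix.foldl_mulVec_nonneg _ (fun a => M.nonneg _) _ hv₀), hsupp]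
  rw [pacc, Ne, Finset.sum_eq_zero_iff_of_nonneg fun i _ => M.pRun_nonneg w i]
  simp only [not_forall, ← ne_eq, ← mem_support, hrun]
  simp only [Set.mem_iUnion, Set.mem_ofPred_eq, exists_prop]
  exact ⟨fun ⟨i, hi, j, hj, hij⟩ => ⟨j, ⟨i, hi, hij⟩, hj⟩,
    fun ⟨j, ⟨i, hi, hij⟩, hj⟩ => ⟨i, hi, j, hj, hij⟩⟩

theorem fa_eq_zero_iff (w : List α) : M.fa w = 0 ↔ M.pacc w = 0 := by
  have hpos : M.pacc w + M.prej w ≠ 0 := (M.postPos w).ne'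
  simp [fa, hpos]

variable {M} in
theorem RecognizesZero.mem_iff_pacc_ne_zero {L : Set (List α)} (h : M.RecognizesZero L)
    (w : List α) : w ∈ L ↔ M.pacc w ≠ 0 := by
  rw [Ne, ← M.fa_eq_zero_iff]
  by_cases hw : w ∈ L
  · simp [hw, (h w).1 hw]
  · simp [hw, (h w).2 hw]

variable {M} in
theorem RecognizesZero.accepts_supportNFA {L : Set (List α)} (h : M.RecognizesZero L) :
    M.supportNFA.accepts = L :=
  Set.ext fun w => (M.pacc_ne_zero_iff w).symm.trans (h.mem_iff_pacc_ne_zero w).symm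

end PostPFA

theorem ZPostS.isRegular {α : Type} {L : Set (List α)} (h : ZPostS L) : Language.IsRegular L :=
  let ⟨M, hM⟩ := h
  ⟨_, inferInstance, M.supportNFA.toDFA, by rw [NFA.toDFA_correct, hM.accepts_supportNFA]⟩

namespace DFA

variable {α : Type} {σ : Type*} (D : DFA α σ)

def endmarkedStep : ESym α → σ → σ
  | .cent, _ => D.start
  | .dollar, s => s
  | .letter a, s => D.step s a

theorem foldl_endmarkedStep (w : List α) (s : σ) :
    (ESym.cent :: (w.map ESym.letter ++ [ESym.dollar])).foldl (fun s c => D.endmarkedStep c s) s =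
      D.eval w := by
  simp [List.foldl_append, List.foldl_map, endmarkedStep, eval, evalFrom]

theorem pRun_ofFun_endmarkedStep {n : ℕ} (D : DFA α (Fin (n + 1))) (w : List α) :
    pRun (fun c => Matrix.ofFun (D.endmarkedStep c)) w = Pi.single (D.eval w) 1 := by
  rw [pRun, Matrix.foldl_ofFun_mulVec_single_one, foldl_endmarkedStep]

end DFA

namespace PostPFA

open scoped Classical in
def ofDFA {α : Type} {n : ℕ} (D : DFA α (Fin (n + 1))) : PostPFA α where
  n := n
  A c := Matrix.ofFun (D.endmarkedStep c)
  nonneg c := Matrix.ofFun_nonneg _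
  colSum c := Matrix.sum_ofFun_apply _
  Qpa := D.accept.toFinset
  Qpr := D.accept.toFinsetᶜ
  disj := disjoint_compl_right
  postPos w := by
    simp only [D.pRun_ofFun_endmarkedStep, Finset.sum_pi_single', Finset.mem_compl]
    split_ifs <;> simp

theorem recognizesZero_ofDFA {α : Type} {n : ℕ} (D : DFA α (Fin (n + 1))) :
    (ofDFA D).RecognizesZero D.accepts := by
  classical
  intro w
  have hfa : (ofDFA D).fa w = if w ∈ D.accepts then 1 else 0 := by
    simp only [fa, pacc, prej, ofDFA, D.pRun_ofFun_endmarkedStep, Finset.sum_pi_single',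
      Finset.mem_compl, Set.mem_toFinset, DFA.mem_accepts]
    split_ifs <;> simp
  rw [hfa]
  exact ⟨fun hw => if_pos hw, fun hw => if_neg hw⟩

end PostPFA

theorem Language.IsRegular.exists_dfa_fin_succ {α : Type} {L : Language α} (h : L.IsRegular) :
    ∃ (n : ℕ) (D : DFA α (Fin (n + 1))), D.accepts = L := by
  obtain ⟨σ, _, D, hD⟩ := h
  have : Nonempty σ := ⟨D.start⟩
  let e : σ ≃ Fin (Fintype.card σ - 1 + 1) :=
    Fintype.equivFinOfCardEq (Nat.succ_pred_eq_of_pos Fintype.card_pos).symm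
  exact ⟨_, D.reindex e, by rw [DFA.accepts_reindex, hD]⟩

theorem ZPostS.of_isRegular {α : Type} {L : Set (List α)} (h : Language.IsRegular L) : ZPostS L :=
  let ⟨_, D, hD⟩ := h.exists_dfa_fin_succ
  ⟨PostPFA.ofDFA D, hD ▸ PostPFA.recognizesZero_ofDFA D⟩

theorem ZPostS_eq_REG_general {α : Type} (L : Set (List α)) :
    ZPostS L ↔ Language.IsRegular L :=
  ⟨ZPostS.isRegular, ZPostS.of_isRegular⟩

/-- `ZPostS` equals the class of regular languages. -/
theorem ZPostS_eq_REG {α : Type} [Fintype α] (L : Set (List α)) :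
    ZPostS L ↔ Language.IsRegular L :=
  ZPostS_eq_REG_general L
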